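/- arXiv:2203.02548 — 2 statements merged into one kernel-verified Lean document; each statement's English description precedes it below -/
import Mathlib

section
/- Let R be a real 3×3 orthogonal matrix (RᵀR = I), let ϱ ∈ ℝ³ with ϱ × e₁ ≠ 0, set t = (ϱ × e₁)/‖ϱ × e₁‖, let J = diag(J₁, J₁, J₃) with J₁, J₃ > 0, and let ε ∈ ℝ. Assume t · (Re₃) = 0. Suppose Ω⁻, Ω̄⁺ ∈ ℝ³ satisfy the impulse equation Ω̄⁺ − Ω⁻ = J⁻¹Rᵀ(ϱ × (−j e₁)) for some j ∈ ℝ, together with the restitution condition ((RΩ̄⁺) × ϱ) · e₁ = −ε ((RΩ⁻) × ϱ) · e₁. Then Ω̄⁺ = Ω⁻ − (1 + ε)(Ω⁻ · (Rᵀt))(Rᵀt). -/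
/-!
Put `u = Rᵀ t`, a unit vector because `R` is orthogonal. The impulse `ϱ × (-j e₁)` is a multiple
of `ϱ × e₁`, so its pull-back by `Rᵀ` is a multiple of `u`; as `u ⟂ e₃` it lies in the eigenspace
of `J⁻¹` for `J₁⁻¹`, whence `Ω̄⁺ - Ω⁻ = k u`. Since `((R Ω) × ϱ) · e₁ = ‖ϱ × e₁‖ (Ω · u)`, the
restitution law says `Ω̄⁺ · u = -ε (Ω⁻ · u)`, and dotting `Ω̄⁺ = Ω⁻ + k u` with `u` gives
`k = -(1 + ε) (Ω⁻ · u)`.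
-/

open Matrix
open scoped Matrix

noncomputable def euclNorm (v : Fin 3 → ℝ) : ℝ :=
  ‖(EuclideanSpace.equiv (Fin 3) ℝ).symm v‖

lemma euclNorm_sq (v : Fin 3 → ℝ) : euclNorm v ^ 2 = v ⬝ᵥ v := by
  rw [euclNorm, EuclideanSpace.norm_eq, Real.sq_sqrt (by positivity)]
  simp [dotProduct, Fin.sum_univ_three, sq]

lemma euclNorm_ne_zero {v : Fin 3 → ℝ} (hv : v ≠ 0) : euclNorm v ≠ 0 := by
  simpa [euclNorm] using hv

lemma inv_euclNorm_smul_dotProduct_self {v : Fin 3 → ℝ} (hv : v ≠ 0) :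
    ((euclNorm v)⁻¹ • v) ⬝ᵥ ((euclNorm v)⁻¹ • v) = 1 := by
  have h := euclNorm_ne_zero hv
  rw [smul_dotProduct, dotProduct_smul, ← euclNorm_sq, smul_eq_mul, smul_eq_mul]
  field_simp

section

variable {n K : Type*} [Fintype n] [CommRing K]

lemma transpose_mulVec_dotProduct_transpose_mulVec [DecidableEq n] {R : Matrix n n K}
    (hR : R * Rᵀ = 1) (v w : n → K) : (Rᵀ *ᵥ v) ⬝ᵥ (Rᵀ *ᵥ w) = v ⬝ᵥ w := by
  rw [dotProduct_mulVec, vecMul_transpose, mulVec_mulVec, hR, one_mulVec]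

lemma transpose_mulVec_apply_eq_dotProduct [DecidableEq n] (R : Matrix n n K) (v : n → K)
    (i : n) : (Rᵀ *ᵥ v) i = v ⬝ᵥ (R *ᵥ Pi.single i 1) := by
  rw [mulVec_single_one, dotProduct_comm]
  rfl

lemma eq_sub_smul_of_sub_eq_smul_of_dotProduct_eq {u Ωm Ωp : n → K} {k ε : K}
    (hu : u ⬝ᵥ u = 1) (himp : Ωp - Ωm = k • u) (hres : Ωp ⬝ᵥ u = -ε * (Ωm ⬝ᵥ u)) :
    Ωp = Ωm - ((1 + ε) * (Ωm ⬝ᵥ u)) • u := by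
  rw [sub_eq_iff_eq_add'] at himp
  rw [himp, add_dotProduct, smul_dotProduct, hu, smul_eq_mul, mul_one] at hres
  rw [himp, show k = -((1 + ε) * (Ωm ⬝ᵥ u)) by linear_combination hres]
  module

end

lemma cross_dotProduct_eq_dotProduct_transpose_mulVec {K : Type*} [CommRing K]
    (R : Matrix (Fin 3) (Fin 3) K) (Ω ϱ e : Fin 3 → K) :
    ((R *ᵥ Ω) ⨯₃ ϱ) ⬝ᵥ e = Ω ⬝ᵥ (Rᵀ *ᵥ (ϱ ⨯₃ e)) := by
  rw [dotProduct_comm, triple_product_permutation, dotProduct_mulVec, vecMul_transpose,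
    dotProduct_comm]

lemma inv_diagonal_mulVec_of_apply_two_eq_zero {K : Type*} [Field K] {a b : K} (ha : a ≠ 0)
    (hb : b ≠ 0) {v : Fin 3 → K} (hv : v 2 = 0) : (diagonal ![a, a, b])⁻¹ *ᵥ v = a⁻¹ • v := by
  have hinv : (diagonal ![a, a, b])⁻¹ = diagonal ![a⁻¹, a⁻¹, b⁻¹] := by
    refine inv_eq_right_inv ?_
    rw [diagonal_mul_diagonal, ← diagonal_one]
    congr 1
    ext i; fin_cases i <;> simp [ha, hb]
  ext i
  fin_cases i <;> simp [hinv, mulVec_diagonal, hv]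

/-- Collision response of the 3D pendulum: if `R` is orthogonal,
`t = (ϱ × e₁)/‖ϱ × e₁‖` is perpendicular to `R e₃`, and `Ω⁻, Ω̄⁺` satisfy the impulse
equation `Ω̄⁺ − Ω⁻ = J⁻¹Rᵀ(ϱ × (−j e₁))` together with the restitution condition
`((RΩ̄⁺) × ϱ)·e₁ = −ε ((RΩ⁻) × ϱ)·e₁`, then
`Ω̄⁺ = Ω⁻ − (1+ε)(Ω⁻·(Rᵀt))(Rᵀt)`. -/
theorem pendulum_collision_response
    (R : Matrix (Fin 3) (Fin 3) ℝ) (hR : Rᵀ * R = 1)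
    (ϱ : Fin 3 → ℝ) (J₁ J₃ : ℝ) (hJ₁ : 0 < J₁) (hJ₃ : 0 < J₃) (ε : ℝ) (j : ℝ)
    (Ωm Ωp : Fin 3 → ℝ) :
    let e₁ : Fin 3 → ℝ := ![(1 : ℝ), 0, 0]
    let e₃ : Fin 3 → ℝ := ![(0 : ℝ), 0, 1]
    let J : Matrix (Fin 3) (Fin 3) ℝ := Matrix.diagonal ![J₁, J₁, J₃]
    let t : Fin 3 → ℝ := (euclNorm (ϱ ⨯₃ e₁))⁻¹ • (ϱ ⨯₃ e₁)
    ϱ ⨯₃ e₁ ≠ 0 →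
    t ⬝ᵥ (R *ᵥ e₃) = 0 →
    Ωp - Ωm = J⁻¹ *ᵥ (Rᵀ *ᵥ (ϱ ⨯₃ ((-j) • e₁))) →
    ((R *ᵥ Ωp) ⨯₃ ϱ) ⬝ᵥ e₁ = -ε * (((R *ᵥ Ωm) ⨯₃ ϱ) ⬝ᵥ e₁) →
    Ωp = Ωm - ((1 + ε) * (Ωm ⬝ᵥ (Rᵀ *ᵥ t))) • (Rᵀ *ᵥ t) := by
  intro e₁ e₃ J t hc hperp himp hres
  set c := ϱ ⨯₃ e₁
  set n := euclNorm c
  have hn : n ≠ 0 := euclNorm_ne_zero hc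
  have hRc : Rᵀ *ᵥ c = n • (Rᵀ *ᵥ t) := by
    rw [← mulVec_smul, smul_inv_smul₀ hn]
  have hu : (Rᵀ *ᵥ t) ⬝ᵥ (Rᵀ *ᵥ t) = 1 := by
    rw [transpose_mulVec_dotProduct_transpose_mulVec (mul_eq_one_comm.mp hR)]
    exact inv_euclNorm_smul_dotProduct_self hc
  have hu₂ : (Rᵀ *ᵥ t) 2 = 0 := by
    rw [transpose_mulVec_apply_eq_dotProduct, ← hperp]
    congr
    ext i; fin_cases i <;> rfl
  refine eq_sub_smul_of_sub_eq_smul_of_dotProduct_eq hu (k := -j * n * J₁⁻¹) ?_ ?_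
  · rw [himp, LinearMap.map_smul, mulVec_smul, hRc, mulVec_smul, mulVec_smul,
      inv_diagonal_mulVec_of_apply_two_eq_zero hJ₁.ne' hJ₃.ne' hu₂]
    module
  · rw [cross_dotProduct_eq_dotProduct_transpose_mulVec,
      cross_dotProduct_eq_dotProduct_transpose_mulVec, hRc,
      dotProduct_smul, dotProduct_smul, smul_eq_mul, smul_eq_mul] at hres
    exact mul_left_cancel₀ hn (by linear_combination hres)
end

section
/- Let R be a real 3×3 matrix, let ϱ ∈ ℝ³, let J = diag(J₁, J₁, J₃) with J₁, J₃ > 0, let j ∈ ℝ, and suppose ((ϱ × e₁)) · (Re₃) = 0. If Ω̄⁺ − Ω⁻ = J⁻¹Rᵀ(ϱ × (−j e₁)), then (Ω̄⁺ − Ω⁻) · e₃ = 0; that is, the third component of the angular velocity is unchanged by the collision impulse: Ω̄⁺₃ = Ω⁻₃. -/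
/-!
Since `J⁻¹` is diagonal, the `e₃`-component of `J⁻¹ Rᵀ τ` is a multiple of `Rᵀ τ · e₃ = τ · R e₃`,
and for the impulse torque `τ = -j (ϱ × e₁)` this vanishes by the orthogonality hypothesis.
-/

open Matrix
open scoped Matrix

namespace Matrix

variable {m n R : Type*} [Fintype m] [Fintype n]

theorem transpose_mulVec_dotProduct [CommSemiring R] (A : Matrix m n R) (v : m → R)
    (w : n → R) : (Aᵀ *ᵥ v) ⬝ᵥ w = v ⬝ᵥ (A *ᵥ w) := by
  rw [mulVec_transpose, dotProduct_mulVec]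

theorem diagonal_mulVec_dotProduct_single [DecidableEq n] [NonAssocSemiring R]
    (d v : n → R) (i : n) :
    (diagonal d *ᵥ v) ⬝ᵥ Pi.single i 1 = d i * (v ⬝ᵥ Pi.single i 1) := by
  simp only [dotProduct_single, mulVec_diagonal, mul_one]

end Matrix

theorem pendulum_collision_third_component_general
    (R : Matrix (Fin 3) (Fin 3) ℝ) (ϱ : Fin 3 → ℝ)
    (J₁ J₃ : ℝ) (j : ℝ) (Ωm Ωp : Fin 3 → ℝ) :
    let e₁ : Fin 3 → ℝ := ![(1 : ℝ), 0, 0]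
    let e₃ : Fin 3 → ℝ := ![(0 : ℝ), 0, 1]
    let J : Matrix (Fin 3) (Fin 3) ℝ := Matrix.diagonal ![J₁, J₁, J₃]
    (ϱ ⨯₃ e₁) ⬝ᵥ (R *ᵥ e₃) = 0 →
    Ωp - Ωm = J⁻¹ *ᵥ (Rᵀ *ᵥ (ϱ ⨯₃ ((-j) • e₁))) →
    ((Ωp - Ωm) ⬝ᵥ e₃ = 0 ∧ Ωp 2 = Ωm 2) := by
  intro e₁ e₃ J hperp hjump
  have he₃ : e₃ = Pi.single 2 1 := by
    ext i; fin_cases i <;> rfl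
  have hdiff : (Ωp - Ωm) ⬝ᵥ e₃ = 0 := by
    rw [hjump, inv_diagonal, he₃, diagonal_mulVec_dotProduct_single, ← he₃,
      transpose_mulVec_dotProduct, map_smul, smul_dotProduct, hperp, smul_zero, mul_zero]
  refine ⟨hdiff, ?_⟩
  rwa [he₃, dotProduct_single, mul_one, Pi.sub_apply, sub_eq_zero] at hdiff

/-- If `(ϱ × e₁) · (R e₃) = 0` and
`Ω̄⁺ − Ω⁻ = J⁻¹Rᵀ(ϱ × (−j e₁))` with `J = diag(J₁,J₁,J₃)`, then the third component of the
angular velocity is unchanged by the collision impulse: `(Ω̄⁺ − Ω⁻)·e₃ = 0`, i.e.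
`Ω̄⁺₃ = Ω⁻₃`. -/
theorem pendulum_collision_third_component
    (R : Matrix (Fin 3) (Fin 3) ℝ) (ϱ : Fin 3 → ℝ)
    (J₁ J₃ : ℝ) (hJ₁ : 0 < J₁) (hJ₃ : 0 < J₃) (j : ℝ) (Ωm Ωp : Fin 3 → ℝ) :
    let e₁ : Fin 3 → ℝ := ![(1 : ℝ), 0, 0]
    let e₃ : Fin 3 → ℝ := ![(0 : ℝ), 0, 1]
    let J : Matrix (Fin 3) (Fin 3) ℝ := Matrix.diagonal ![J₁, J₁, J₃]
    (ϱ ⨯₃ e₁) ⬝ᵥ (R *ᵥ e₃) = 0 →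
    Ωp - Ωm = J⁻¹ *ᵥ (Rᵀ *ᵥ (ϱ ⨯₃ ((-j) • e₁))) →
    ((Ωp - Ωm) ⬝ᵥ e₃ = 0 ∧ Ωp 2 = Ωm 2) :=
  pendulum_collision_third_component_general R ϱ J₁ J₃ j Ωm Ωp
end
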